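/- Closed form for the rolling average variance in the non-overlapping regime: with s_{p,m} := (1/(m−p)²) · Σ_{i=1}^{m−p} Σ_{j=1}^{m−p} NLRC_{p,m}(i,j), for every integer k ≥ 1 one has s_{p, 2p+k} = (1/(p+k)²) · ( p² · s_{p,2p} + k · (φ₀ + φ₁ + ⋯ + φ_p)² ), where φ₀ := −1. -/

import Mathlib

/-!
Let `T` be the lower unitriangular matrix whose first `p` rows are those of the identity and
whose row `a ≥ p` carries `-φ_u` in column `a - u`: applied to `(X₁, …, X_m)` it keeps the first
`p` observations and replaces each later one by its innovation `ε`. The Yule–Walker equations say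
that the covariance matrix `D = T Γ_m Tᵀ` of this vector has column `d` equal to `σ² e_d` for
`d ≥ p`. As `T` is lower triangular, its columns `b ≥ p` live in rows `≥ p`, where `D⁻¹` acts as
`σ⁻²`; hence `σ² Γ_m⁻¹ = σ² Tᵀ D⁻¹ T` agrees with `Tᵀ T` in these columns, and `NLRC_{p,m}` is the
Gram matrix of the last `m - p` columns of `T`. Its entry sum is `∑_c (∑_{b ≥ p} T c b)²`, whose
row sums vanish for `c < p` and equal `-(φ₀ + ⋯ + φ_{min(c-p, p)})` otherwise; for `m ≥ 2p` this
gives `(m - p)² s_{p,m} = ∑_{t<p} (φ₀ + ⋯ + φ_t)² + (m - 2p) (φ₀ + ⋯ + φ_p)²`.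
-/

open Matrix Finset

lemma Matrix.inv_apply_eq_ite_of_apply_eq_ite {K n : Type*} [Field K] [Fintype n] [DecidableEq n]
    {D : Matrix n n K} (hD : IsUnit D.det) {c : n} {s : K} (hs : s ≠ 0)
    (hcol : ∀ x, D x c = if x = c then s else 0) (x : n) :
    D⁻¹ x c = if x = c then s⁻¹ else 0 := by
  have h := congr_fun (congr_fun (nonsing_inv_mul D hD) x) c
  simp only [mul_apply, hcol, mul_ite, mul_zero, sum_ite_eq', mem_univ, if_true, one_apply] at h
  split_ifs with hxc
  · rw [if_pos hxc] at h
    exact eq_inv_of_mul_eq_one_left h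
  · rw [if_neg hxc] at h
    exact (mul_eq_zero.1 h).resolve_right hs

def Matrix.toeplitz {α : Type*} (γ : ℤ → α) (m : ℕ) : Matrix (Fin m) (Fin m) α :=
  of fun i j => γ (i - j)

lemma Matrix.toeplitz_transpose {α : Type*} {γ : ℤ → α} (hsym : ∀ j : ℤ, γ (-j) = γ j)
    (m : ℕ) :
    (toeplitz γ m)ᵀ = toeplitz γ m := by
  ext i j
  simp only [toeplitz, transpose_apply, of_apply, ← hsym ((j : ℤ) - i), neg_sub]

section Filter

variable {K : Type*} [CommRing K]

noncomputable def arFilter (p : ℕ) (φ : ℕ → K) (z : ℤ) : K :=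
  if 0 ≤ z ∧ z ≤ p then φ z.toNat else 0

variable {p : ℕ} {φ : ℕ → K}

lemma arFilter_natCast {u : ℕ} (hu : u ≤ p) : arFilter p φ u = φ u := by
  simp [arFilter, hu]

lemma arFilter_eq_zero {z : ℤ} (hz : z < 0 ∨ (p : ℤ) < z) : arFilter p φ z = 0 := by
  rw [arFilter, if_neg]
  omega

lemma sum_range_arFilter_mul {n t : ℕ} (htn : t < n) (h : ℕ → K) :
    ∑ c ∈ range n, arFilter p φ (t - c) * h c = ∑ u ∈ range (min t p + 1), φ u * h (t - u) := by
  have hsupp : ∑ c ∈ range n, arFilter p φ (t - c) * h c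
      = ∑ c ∈ Icc (t - p) t, arFilter p φ (t - c) * h c := by
    refine (sum_subset (fun c hc => ?_) fun c _ hc => ?_).symm
    · simp only [mem_Icc, mem_range] at hc ⊢
      omega
    · rw [arFilter_eq_zero (by simp only [mem_Icc] at hc; omega), zero_mul]
  rw [hsupp]
  refine sum_nbij' (t - ·) (t - ·) ?_ ?_ ?_ ?_ fun c hc => ?_
  · intro c hc; simp only [mem_Icc, mem_range] at hc ⊢; omega
  · intro u hu; simp only [mem_Icc, mem_range] at hu ⊢; omega
  · intro c hc; simp only [mem_Icc] at hc; omega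
  · intro u hu; simp only [mem_range] at hu; omega
  · rw [mem_Icc] at hc
    rw [← arFilter_natCast (p := p) (φ := φ) (by omega : t - c ≤ p), Nat.cast_sub hc.2,
      Nat.sub_sub_self hc.2]

lemma sum_range_sq_sum_range_min {n : ℕ} (hpn : p ≤ n) :
    ∑ t ∈ range n, (∑ u ∈ range (min t p + 1), φ u) ^ 2
      = ∑ t ∈ range p, (∑ u ∈ range (t + 1), φ u) ^ 2
        + ((n - p : ℕ) : K) * (∑ u ∈ range (p + 1), φ u) ^ 2 := by
  obtain ⟨k, rfl⟩ := Nat.exists_eq_add_of_le hpn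
  rw [sum_range_add, Nat.add_sub_cancel_left]
  congr 1
  · exact sum_congr rfl fun t ht => by rw [min_eq_left (mem_range.1 ht).le]
  · simp

def IsYuleWalker (p : ℕ) (φ : ℕ → K) (σ2 : K) (γ : ℤ → K) : Prop :=
  ∀ n : ℤ, 0 ≤ n → ∑ u ∈ range (p + 1), φ u * γ (n - u) = if n = 0 then -σ2 else 0

lemma isYuleWalker_of_recurrence {σ2 : K} {γ : ℤ → K} (hφ0 : φ 0 = -1)
    (hsym : ∀ j : ℤ, γ (-j) = γ j)
    (hYW0 : γ 0 = (∑ i ∈ Icc 1 p, φ i * γ i) + σ2)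
    (hYW : ∀ j : ℤ, 1 ≤ j → γ j = ∑ i ∈ Icc 1 p, φ i * γ (j - i)) :
    IsYuleWalker p φ σ2 γ := by
  intro n hn
  have hsplit :
      ∑ u ∈ range (p + 1), φ u * γ (n - u) = -γ n + ∑ i ∈ Icc 1 p, φ i * γ (n - i) := by
    rw [range_eq_Ico, sum_eq_sum_Ico_succ_bot (by omega), hφ0]
    simp only [Nat.cast_zero, sub_zero, neg_one_mul]
    rfl
  rw [hsplit]
  split_ifs with h0
  · subst h0
    simp only [zero_sub, hsym, hYW0]
    ring
  · rw [← hYW n (by omega), neg_add_cancel]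

end Filter

section ARTransform

variable {K : Type*} [Field K] {p : ℕ} {φ : ℕ → K} {m : ℕ} {σ2 : K} {γ : ℤ → K}

variable (p φ m) in
noncomputable def arTransform : Matrix (Fin m) (Fin m) K :=
  of fun a b => if (a : ℕ) < p then (1 : Matrix (Fin m) (Fin m) K) a b else -arFilter p φ (a - b)

lemma arTransform_apply_of_lt {a b : Fin m} (hab : a < b) : arTransform p φ m a b = 0 := by
  have : (a : ℕ) < b := hab
  by_cases ha : (a : ℕ) < p
  · simp [arTransform, ha, one_apply_ne hab.ne]
  · simp [arTransform, ha, arFilter_eq_zero (Or.inl (by omega : (a : ℤ) - b < 0))]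

lemma arTransform_apply_self (hφ0 : φ 0 = -1) (a : Fin m) : arTransform p φ m a a = 1 := by
  by_cases ha : (a : ℕ) < p
  · simp [arTransform, ha]
  · simp only [arTransform, of_apply, ha, if_false, sub_self]
    rw [← Nat.cast_zero, arFilter_natCast (Nat.zero_le p), hφ0, neg_neg]

lemma det_arTransform (hφ0 : φ 0 = -1) : (arTransform p φ m).det = 1 := by
  rw [det_of_isLowerTriangular _ fun a b hab => arTransform_apply_of_lt hab]
  exact prod_eq_one fun a _ => arTransform_apply_self hφ0 a

lemma sum_arTransform_apply_natAdd (c : Fin m) :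
    ∑ i : Fin (m - p), arTransform p φ m c ⟨p + i, Nat.add_lt_of_lt_sub' i.isLt⟩
      = if (c : ℕ) < p then 0 else -∑ u ∈ range (min (c - p) p + 1), φ u := by
  split_ifs with hc
  · refine sum_eq_zero fun i _ => arTransform_apply_of_lt ?_
    change (c : ℕ) < p + i
    omega
  · have hshift : ∀ i : ℕ, ((c : ℕ) : ℤ) - ((p + i : ℕ) : ℤ) = ((c - p : ℕ) : ℤ) - i := by
      intro i; omega
    simp only [arTransform, of_apply, hc, if_false, hshift, sum_neg_distrib]
    congr 1
    rw [Fin.sum_univ_eq_sum_range (fun i => arFilter p φ (((c - p : ℕ) : ℤ) - i)) (m - p)]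
    simpa using sum_range_arFilter_mul (p := p) (φ := φ) (by omega : (c : ℕ) - p < m - p) 1

lemma sum_transpose_mul_arTransform_apply_natAdd (hm : p ≤ m) :
    ∑ i : Fin (m - p), ∑ j : Fin (m - p),
      ((arTransform p φ m)ᵀ * arTransform p φ m)
        ⟨p + i, Nat.add_lt_of_lt_sub' i.isLt⟩ ⟨p + j, Nat.add_lt_of_lt_sub' j.isLt⟩
      = ∑ t ∈ range (m - p), (∑ u ∈ range (min t p + 1), φ u) ^ 2 := by
  calc _ = ∑ c : Fin m,
        (∑ i : Fin (m - p), arTransform p φ m c ⟨p + i, Nat.add_lt_of_lt_sub' i.isLt⟩ : K) ^ 2 := by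
        simp only [mul_apply, transpose_apply, sq, sum_mul_sum]
        exact (sum_congr rfl fun i _ => sum_comm).trans sum_comm
    _ = ∑ c ∈ range m,
        if c < p then (0 : K) else (∑ u ∈ range (min (c - p) p + 1), φ u) ^ 2 := by
        rw [← Fin.sum_univ_eq_sum_range (fun c => if c < p then (0 : K) else _)]
        refine sum_congr rfl fun c _ => ?_
        rw [sum_arTransform_apply_natAdd]
        split_ifs <;> simp
    _ = _ := by
        obtain ⟨n, rfl⟩ := Nat.exists_eq_add_of_le hm
        rw [sum_range_add, Nat.add_sub_cancel_left,
          sum_eq_zero fun c hc => if_pos (mem_range.1 hc)]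
        simp

lemma toeplitz_mul_arTransform_transpose_apply (hsym : ∀ j : ℤ, γ (-j) = γ j)
    (hAR : IsYuleWalker p φ σ2 γ)
    {x d : Fin m} (hd : p ≤ d) (hxd : x ≤ d) :
    (toeplitz γ m * (arTransform p φ m)ᵀ) x d = if x = d then σ2 else 0 := by
  have hxd' : (x : ℕ) ≤ d := hxd
  calc (toeplitz γ m * (arTransform p φ m)ᵀ) x d
      = -∑ y ∈ range m, arFilter p φ ((d : ℕ) - y) * γ (x - y) := by
        simp only [mul_apply, toeplitz, arTransform, transpose_apply, of_apply, not_lt.2 hd,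
          if_false, ← Fin.sum_univ_eq_sum_range (fun y => arFilter p φ ((d : ℕ) - y) * γ (x - y)),
          ← sum_neg_distrib]
        exact sum_congr rfl fun y _ => by ring
    _ = -∑ u ∈ range (p + 1), φ u * γ (((d : ℕ) - x : ℕ) - u) := by
        rw [sum_range_arFilter_mul d.isLt, min_eq_right hd]
        congr 1
        refine sum_congr rfl fun u hu => ?_
        rw [← hsym]
        congr 2
        have := mem_range.1 hu
        push_cast [hd.trans' (Nat.lt_succ_iff.1 this), hxd']
        ring
    _ = if x = d then σ2 else 0 := by
        have hdx : (d : ℕ) - x = 0 ↔ x = d := by rw [Fin.ext_iff]; omega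
        rw [hAR _ (Nat.cast_nonneg _)]
        simp only [Nat.cast_eq_zero, hdx]
        split_ifs <;> simp only [neg_neg, neg_zero]

lemma arTransform_mul_toeplitz_mul_transpose_apply (hφ0 : φ 0 = -1)
    (hsym : ∀ j : ℤ, γ (-j) = γ j) (hAR : IsYuleWalker p φ σ2 γ)
    (c : Fin m) {d : Fin m} (hd : p ≤ d) :
    (arTransform p φ m * toeplitz γ m * (arTransform p φ m)ᵀ) c d = if c = d then σ2 else 0 := by
  have upper : ∀ c d : Fin m, p ≤ d → c ≤ d →
      (arTransform p φ m * toeplitz γ m * (arTransform p φ m)ᵀ) c d = if c = d then σ2 else 0 := by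
    intro c d hd hcd
    have hterm : ∀ x, arTransform p φ m c x * (toeplitz γ m * (arTransform p φ m)ᵀ) x d
        = arTransform p φ m c x * if x = d then σ2 else 0 := by
      intro x
      rcases lt_or_ge c x with hcx | hxc
      · rw [arTransform_apply_of_lt hcx, zero_mul, zero_mul]
      · rw [toeplitz_mul_arTransform_transpose_apply hsym hAR hd (hxc.trans hcd)]
    rw [Matrix.mul_assoc, mul_apply, sum_congr rfl fun x _ => hterm x]
    simp only [mul_ite, mul_zero, sum_ite_eq', mem_univ, if_true]
    rcases hcd.lt_or_eq with hlt | rfl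
    · rw [arTransform_apply_of_lt hlt, zero_mul, if_neg hlt.ne]
    · rw [arTransform_apply_self hφ0, one_mul, if_pos rfl]
  rcases le_or_gt c d with hcd | hdc
  · exact upper c d hd hcd
  · have hsymm : (arTransform p φ m * toeplitz γ m * (arTransform p φ m)ᵀ)ᵀ
        = arTransform p φ m * toeplitz γ m * (arTransform p φ m)ᵀ := by
      rw [transpose_mul, transpose_mul, transpose_transpose, toeplitz_transpose hsym,
        Matrix.mul_assoc]
    rw [← hsymm, transpose_apply, upper d c (hd.trans hdc.le) hdc.le, if_neg hdc.ne',
      if_neg hdc.ne]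

lemma mul_toeplitz_inv_apply (hφ0 : φ 0 = -1) (hsym : ∀ j : ℤ, γ (-j) = γ j)
    (hAR : IsYuleWalker p φ σ2 γ)
    (hσ : σ2 ≠ 0) (hΓ : IsUnit (toeplitz γ m).det) (a : Fin m) {b : Fin m} (hb : p ≤ b) :
    σ2 * (toeplitz γ m)⁻¹ a b = ((arTransform p φ m)ᵀ * arTransform p φ m) a b := by
  set D := arTransform p φ m * toeplitz γ m * (arTransform p φ m)ᵀ
  have hT : IsUnit (arTransform p φ m).det := by rw [det_arTransform hφ0]; exact isUnit_one
  have hD : IsUnit D.det := by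
    simp only [D, det_mul, det_transpose]
    exact (hT.mul hΓ).mul hT
  have hinv : (toeplitz γ m)⁻¹ = (arTransform p φ m)ᵀ * D⁻¹ * arTransform p φ m := by
    rw [Matrix.mul_inv_rev, Matrix.mul_inv_rev, Matrix.mul_assoc, Matrix.mul_assoc,
      nonsing_inv_mul_cancel_right _ _ hT,
      mul_nonsing_inv_cancel_left _ _ (by rwa [det_transpose])]
  have hcol : ∀ c, (D⁻¹ * arTransform p φ m) c b = σ2⁻¹ * arTransform p φ m c b := by
    intro c
    have hterm : ∀ d, D⁻¹ c d * arTransform p φ m d b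
        = (if c = d then σ2⁻¹ else 0) * arTransform p φ m d b := by
      intro d
      rcases lt_or_ge d b with hdb | hbd
      · rw [arTransform_apply_of_lt hdb, mul_zero, mul_zero]
      · rw [inv_apply_eq_ite_of_apply_eq_ite hD hσ
          (fun x => arTransform_mul_toeplitz_mul_transpose_apply hφ0 hsym hAR x (hb.trans hbd))]
    rw [mul_apply, sum_congr rfl fun d _ => hterm d]
    simp
  rw [hinv, Matrix.mul_assoc, mul_apply, mul_apply, mul_sum]
  refine sum_congr rfl fun c _ => ?_
  rw [hcol, mul_left_comm, mul_inv_cancel_left₀ hσ]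

lemma sum_mul_toeplitz_inv_apply_natAdd (hφ0 : φ 0 = -1) (hsym : ∀ j : ℤ, γ (-j) = γ j)
    (hAR : IsYuleWalker p φ σ2 γ)
    (hσ : σ2 ≠ 0) (hΓ : IsUnit (toeplitz γ m).det) (hm : 2 * p ≤ m) :
    ∑ i : Fin (m - p), ∑ j : Fin (m - p),
      σ2 * (toeplitz γ m)⁻¹
        ⟨p + i, Nat.add_lt_of_lt_sub' i.isLt⟩ ⟨p + j, Nat.add_lt_of_lt_sub' j.isLt⟩
      = ∑ t ∈ range p, (∑ u ∈ range (t + 1), φ u) ^ 2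
        + ((m - p - p : ℕ) : K) * (∑ u ∈ range (p + 1), φ u) ^ 2 := by
  rw [← sum_range_sq_sum_range_min (by omega : p ≤ m - p),
    ← sum_transpose_mul_arTransform_apply_natAdd (by omega)]
  exact sum_congr rfl fun i _ => sum_congr rfl fun j _ =>
    mul_toeplitz_inv_apply hφ0 hsym hAR hσ hΓ _ (Nat.le_add_right p j)

end ARTransform

/-- Context: AR(p) coefficients `φ`, white-noise variance `σ2`, autocovariance
sequence `γ` satisfying the Yule–Walker equations, and the autocovariance
Toeplitz matrices `Γ m`, assumed positive definite for `m ≥ 1`. -/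
theorem stmt_16
    (p : ℕ)
    (φ : ℕ → ℝ) (hφ0 : φ 0 = -1)
    (σ2 : ℝ) (hσ : 0 < σ2)
    (γ : ℤ → ℝ)
    (hsym : ∀ j : ℤ, γ (-j) = γ j)
    (hYW0 : γ 0 = (∑ i ∈ Finset.Icc 1 p, φ i * γ (i : ℤ)) + σ2)
    (hYW : ∀ j : ℤ, 1 ≤ j → γ j = ∑ i ∈ Finset.Icc 1 p, φ i * γ (j - (i : ℤ)))
    (Γ : (m : ℕ) → Matrix (Fin m) (Fin m) ℝ)
    (hΓ : ∀ m : ℕ, ∀ i j : Fin m, Γ m i j = γ |(i : ℤ) - (j : ℤ)|)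
    (hpd : ∀ m : ℕ, 1 ≤ m → (Γ m).PosDef)
    :
    let s : ℕ → ℝ := fun m =>
      (1 / ((m - p : ℕ) : ℝ) ^ 2) * ∑ i : Fin (m - p), ∑ j : Fin (m - p),
        σ2 * (Γ m)⁻¹ ⟨p + i, by have := i.isLt; omega⟩ ⟨p + j, by have := j.isLt; omega⟩
    ∀ k : ℕ, 1 ≤ k →
      s (2 * p + k) = (1 / ((p + k : ℕ) : ℝ) ^ 2) *
        ((p : ℝ) ^ 2 * s (2 * p) + (k : ℝ) * (∑ i ∈ Finset.range (p + 1), φ i) ^ 2) := by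
  intro s k _
  have hΓ_eq : Γ = toeplitz γ := funext fun m => ext fun i j => by
    rcases abs_choice ((i : ℤ) - j) with h | h
    · simp [hΓ, h, toeplitz]
    · simp [hΓ, h, toeplitz, ← hsym ((i : ℤ) - j)]
  subst hΓ_eq
  have hdet : ∀ m, IsUnit (toeplitz γ m).det := fun m => by
    rcases Nat.eq_zero_or_pos m with rfl | hm
    · simp
    · exact (isUnit_iff_isUnit_det _).1 (hpd m hm).isUnit
  have hs : ∀ m, 2 * p ≤ m → s m = 1 / ((m - p : ℕ) : ℝ) ^ 2 *
      (∑ t ∈ range p, (∑ u ∈ range (t + 1), φ u) ^ 2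
        + ((m - p - p : ℕ) : ℝ) * (∑ u ∈ range (p + 1), φ u) ^ 2) := fun m hm =>
    congrArg _ <| sum_mul_toeplitz_inv_apply_natAdd hφ0 hsym
      (isYuleWalker_of_recurrence hφ0 hsym hYW0 hYW) hσ.ne' (hdet m) hm
  rw [hs _ (by omega), hs _ le_rfl, show 2 * p + k - p = p + k by omega,
    show p + k - p = k by omega, show 2 * p - p = p by omega, Nat.sub_self, Nat.cast_zero,
    zero_mul, add_zero]
  rcases Nat.eq_zero_or_pos p with rfl | hp
  · simp
  · field_simp
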